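/- If X is a path-connected semi-locally small loop space, then π₁ˢᵍ(X,x) = π₁ˢ(X,x) for every x ∈ X. -/

import Mathlib

open CategoryTheory Topology

attribute [local instance] Path.Homotopic.setoid

noncomputable section

variable {X Y E : Type*} [TopologicalSpace X] [TopologicalSpace Y] [TopologicalSpace E]

/-- Build an element of the fundamental group from a homotopy class of loops. -/
def fromLoop {x : X} (p : Path.Homotopic.Quotient x x) : FundamentalGroup X x :=
  FundamentalGroup.fromPath p

/-- The homotopy class of loops underlying an element of the fundamental group. -/
def toLoop {x : X} (γ : FundamentalGroup X x) : Path.Homotopic.Quotient x x :=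
  FundamentalGroup.toPath γ

/-- A fundamental group element is *small* if it has a loop representative inside every
neighborhood of the basepoint. -/
def IsSmall {x : X} (γ : FundamentalGroup X x) : Prop :=
  ∀ U ∈ nhds x, ∃ δ : Path x x, (∀ t, δ t ∈ U) ∧ fromLoop ⟦δ⟧ = γ

/-- The set of small loop classes, i.e. the carrier of the small loop group `π₁ˢ(X,x)`. -/
def smallSet (X : Type*) [TopologicalSpace X] (x : X) : Set (FundamentalGroup X x) :=
  {γ | IsSmall γ}

/-- Conjugate of a loop class at `y` by a path `α` from `x` to `y`: `α * β * α⁻¹`. -/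
def conjPath {x y : X} (α : Path x y) (β : FundamentalGroup X y) : FundamentalGroup X x :=
  fromLoop (Path.Homotopic.Quotient.trans
    (Path.Homotopic.Quotient.trans (⟦α⟧ : Path.Homotopic.Quotient x y) (toLoop β))
    (⟦α.symm⟧ : Path.Homotopic.Quotient y x))

/-- The SG subgroup `π₁ˢᵍ(X,x)`: generated by conjugates of small loop classes. -/
def sgSubgroup (X : Type*) [TopologicalSpace X] (x : X) : Subgroup (FundamentalGroup X x) :=
  Subgroup.closure {g | ∃ (y : X) (α : Path x y) (β : FundamentalGroup X y), IsSmall β ∧ g = conjPath α β}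

/-- The map induced on fundamental groups by a continuous map. -/
def piMap (f : C(X, Y)) (x : X) (γ : FundamentalGroup X x) : FundamentalGroup Y (f x) :=
  fromLoop (Path.Homotopic.Quotient.map (toLoop γ) f)

/-- A small loop space: a path-connected, non-simply connected space all of whose loops
are small. -/
def IsSmallLoopSpace (X : Type*) [TopologicalSpace X] : Prop :=
  PathConnectedSpace X ∧ ¬ SimplyConnectedSpace X ∧
    ∀ (x : X) (γ : FundamentalGroup X x), IsSmall γ

/-- A space is homotopically Hausdorff if every nontrivial loop class can be kept away from
some neighborhood of its basepoint. -/
def HomotopicallyHausdorff (X : Type*) [TopologicalSpace X] : Prop :=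
  ∀ (x : X) (γ : FundamentalGroup X x), γ ≠ 1 →
    ∃ U ∈ nhds x, ∀ δ : Path x x, (∀ t, δ t ∈ U) → fromLoop ⟦δ⟧ ≠ γ

/-- The image of `π₁(U,y) → π₁(X,y)`: classes of loops having a representative inside `U`. -/
def loopsIn (U : Set X) (y : X) : Set (FundamentalGroup X y) :=
  {γ | ∃ δ : Path y y, (∀ t, δ t ∈ U) ∧ fromLoop ⟦δ⟧ = γ}

/-- A semi-locally small loop space. -/
def SemiLocallySmallLoop (X : Type*) [TopologicalSpace X] : Prop :=
  ∀ x : X, ∃ U : Set X, IsOpen U ∧ x ∈ U ∧ ∀ y ∈ U, loopsIn U y = smallSet X y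

/-! Conjugation by a path `p` preserves smallness when `p` runs inside one of the open sets `U`
of the definition: a small loop at the end of `p` has a representative in `U`, hence so does its
conjugate, which is therefore small. Up to homotopy every path is a concatenation of such pieces
(Lebesgue number lemma), so every generator of `π₁ˢᵍ(X,x)` lies in the subgroup `π₁ˢ(X,x)`; the
reverse inclusion is trivial. -/

namespace Path

theorem prop_of_local_of_trans (Q : ∀ {a b : X}, Path a b → Prop)
    (hhom : ∀ {a b : X} {p q : Path a b}, p.Homotopic q → Q p → Q q)
    (htrans : ∀ {a b c : X} {p : Path a b} {q : Path b c}, Q p → Q q → Q (p.trans q))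
    (hloc : ∀ x : X, ∃ U ∈ 𝓝 x, ∀ {a b : X} (p : Path a b), Set.range p ⊆ U → Q p)
    {a b : X} (γ : Path a b) : Q γ := by
  choose U hU hQ using hloc
  obtain ⟨t, ht₀, ht_mono, ⟨n, htn⟩, ht_sub⟩ :=
    exists_monotone_Icc_subset_open_cover_unitInterval
      (c := fun x => γ ⁻¹' interior (U x)) (fun x => isOpen_interior.preimage γ.continuous)
      (fun s _ => Set.mem_iUnion.2 ⟨γ s, mem_interior_iff_mem_nhds.2 (hU _)⟩)
  have hpiece (k : ℕ) : Q (γ.subpath (t k) (t (k + 1))) := by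
    obtain ⟨x, hx⟩ := ht_sub k
    apply hQ x
    rw [γ.range_subpath, Set.uIcc_of_le (ht_mono k.le_succ), Set.image_subset_iff]
    exact hx.trans (Set.preimage_mono interior_subset)
  have hinit (k : ℕ) : Q (γ.subpath 0 (t k)) := by
    induction k with
    | zero =>
      rw [ht₀, subpath_self]
      exact hQ (γ 0) _ (by simp [refl_range, mem_of_mem_nhds (hU _)])
    | succ k ih => exact hhom ⟨Homotopy.subpathTransSubpath γ 0 _ _⟩ (htrans ih (hpiece k))
  have hcast : ∀ {a' b' : X} (ha : a' = a) (hb : b' = b), Q (γ.cast ha hb) → Q γ := by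
    rintro _ _ rfl rfl
    exact id
  have hwhole := hinit n
  rw [htn n le_rfl, subpath_zero_one] at hwhole
  exact hcast _ _ hwhole

end Path

theorem conjPath_refl {x : X} (γ : FundamentalGroup X x) : conjPath (Path.refl x) γ = γ := by
  simp [conjPath, fromLoop, toLoop]

theorem conjPath_trans {x y z : X} (σ : Path x y) (τ : Path y z) (β : FundamentalGroup X z) :
    conjPath (σ.trans τ) β = conjPath σ (conjPath τ β) := by
  simp [conjPath, fromLoop, toLoop]

theorem conjPath_eq_of_homotopic {x y : X} {α₁ α₂ : Path x y} (h : α₁.Homotopic α₂)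
    (β : FundamentalGroup X y) : conjPath α₁ β = conjPath α₂ β := by
  simp [conjPath, Path.Homotopic.Quotient.eq.2 h]

section loopsIn

variable {U : Set X}

theorem one_mem_loopsIn {x : X} (hx : x ∈ U) : (1 : FundamentalGroup X x) ∈ loopsIn U x :=
  ⟨Path.refl x, fun _ => hx, rfl⟩

theorem mul_mem_loopsIn {x : X} {γ₁ γ₂ : FundamentalGroup X x} (h₁ : γ₁ ∈ loopsIn U x)
    (h₂ : γ₂ ∈ loopsIn U x) : γ₁ * γ₂ ∈ loopsIn U x := by
  obtain ⟨δ₁, hδ₁, rfl⟩ := h₁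
  obtain ⟨δ₂, hδ₂, rfl⟩ := h₂
  refine ⟨δ₂.trans δ₁, ?_, rfl⟩
  rw [← Set.range_subset_iff, Path.trans_range]
  exact Set.union_subset (Set.range_subset_iff.2 hδ₂) (Set.range_subset_iff.2 hδ₁)

theorem inv_mem_loopsIn {x : X} {γ : FundamentalGroup X x} (h : γ ∈ loopsIn U x) :
    γ⁻¹ ∈ loopsIn U x := by
  obtain ⟨δ, hδ, rfl⟩ := h
  exact ⟨δ.symm, fun _ => hδ _, rfl⟩

theorem conjPath_mem_loopsIn {a b : X} {p : Path a b} (hp : Set.range p ⊆ U)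
    {β : FundamentalGroup X b} (hβ : β ∈ loopsIn U b) : conjPath p β ∈ loopsIn U a := by
  obtain ⟨δ, hδ, rfl⟩ := hβ
  refine ⟨(p.trans δ).trans p.symm, ?_, rfl⟩
  rw [← Set.range_subset_iff, Path.trans_range, Path.trans_range, Path.symm_range]
  exact Set.union_subset (Set.union_subset hp (Set.range_subset_iff.2 hδ)) hp

end loopsIn

def smallSubgroup (X : Type*) [TopologicalSpace X] (x : X) : Subgroup (FundamentalGroup X x) where
  carrier := smallSet X x
  one_mem' _ hU := one_mem_loopsIn (mem_of_mem_nhds hU)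
  mul_mem' h₁ h₂ U hU := mul_mem_loopsIn (h₁ U hU) (h₂ U hU)
  inv_mem' h U hU := inv_mem_loopsIn (h U hU)

theorem isSmall_conjPath_of_range_subset {U : Set X} (hU : ∀ y ∈ U, loopsIn U y = smallSet X y)
    {a b : X} {p : Path a b} (hp : Set.range p ⊆ U) {β : FundamentalGroup X b} (hβ : IsSmall β) :
    IsSmall (conjPath p β) := by
  have hβU : β ∈ loopsIn U b := by rwa [hU b (hp ⟨1, p.target⟩)]
  have hconj := conjPath_mem_loopsIn hp hβU
  rwa [hU a (hp ⟨0, p.source⟩)] at hconj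

theorem isSmall_conjPath (hX : SemiLocallySmallLoop X) {x y : X} (α : Path x y)
    {β : FundamentalGroup X y} (hβ : IsSmall β) : IsSmall (conjPath α β) := by
  refine Path.prop_of_local_of_trans (fun p => ∀ β, IsSmall β → IsSmall (conjPath p β))
    (fun h hp β hβ => conjPath_eq_of_homotopic h β ▸ hp β hβ)
    (fun hp hq β hβ => (conjPath_trans _ _ β).symm ▸ hp _ (hq β hβ)) (fun z => ?_) α β hβ
  obtain ⟨U, hU_open, hzU, hU⟩ := hX z
  exact ⟨U, hU_open.mem_nhds hzU, fun _ hp _ hβ => isSmall_conjPath_of_range_subset hU hp hβ⟩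

theorem sg_eq_small_of_semiLocallySmallLoop_general (X : Type*) [TopologicalSpace X]
    (hX : SemiLocallySmallLoop X) (x : X) :
    (sgSubgroup X x : Set (FundamentalGroup X x)) = smallSet X x := by
  refine Set.Subset.antisymm ?_ fun γ hγ => Subgroup.subset_closure ⟨x, .refl x, γ, hγ, ?_⟩
  · change sgSubgroup X x ≤ smallSubgroup X x
    refine Subgroup.closure_le _ |>.2 ?_
    rintro _ ⟨y, α, β, hβ, rfl⟩
    exact isSmall_conjPath hX α hβ
  · exact (conjPath_refl γ).symm

/-- if `X` is a path-connected semi-locally small loop space, then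
`π₁ˢᵍ(X,x) = π₁ˢ(X,x)` for every `x ∈ X`. -/
theorem sg_eq_small_of_semiLocallySmallLoop (X : Type*) [TopologicalSpace X]
    [PathConnectedSpace X] (hX : SemiLocallySmallLoop X) (x : X) :
    (sgSubgroup X x : Set (FundamentalGroup X x)) = smallSet X x :=
  sg_eq_small_of_semiLocallySmallLoop_general X hX x

end
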